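/- arXiv:0903.3200 — 8 statements merged into one kernel-verified Lean document; each statement's English description precedes it below -/
import Mathlib

section
/- Let G be an abelian group and A, B ⊆ G finite nonempty subsets. If |A+B| ≤ |A| + |B| - k, then every element x of A+B has at least k representations as x = a + b with a ∈ A and b ∈ B. -/
/-!
This is Kemperman's generalisation of Scherk's theorem: `|A| + |B| ≤ |A + B| + r_{A,B}(x)` for
every `x ∈ A + B`, proved by induction on `|B|`. Write `x = a₁ + b₁`. If `A + B` is no larger than
`A`, every translate `A + b` is all of `A + B`, so each `b ∈ B` gives the representation
`(x - b, b)`. Otherwise some `e ∈ A - b₁` has `e + B ⊄ A`, and the Dyson e-transform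
`(A ∪ (e + B), B ∩ (A - e))` keeps `|A| + |B|` and `x` in the sumset, does not enlarge the sumset
or the number of representations of `x`, and strictly shrinks `B`.
-/

open Pointwise Finset

namespace Finset

variable {G : Type*} [AddCommGroup G] [DecidableEq G]

lemma mem_addDysonETransform_fst {e c : G} {x : Finset G × Finset G} :
    c ∈ (addDysonETransform e x).1 ↔ c ∈ x.1 ∨ -e + c ∈ x.2 := by
  rw [addDysonETransform_fst, mem_union, ← neg_vadd_mem_iff, vadd_eq_add]

lemma mem_addDysonETransform_snd {e c : G} {x : Finset G × Finset G} :
    c ∈ (addDysonETransform e x).2 ↔ c ∈ x.2 ∧ e + c ∈ x.1 := by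
  rw [addDysonETransform_snd, mem_inter, mem_neg_vadd_finset_iff, vadd_eq_add]

lemma card_le_card_filter_add_eq_of_card_add_le {A B : Finset G} {x : G} (hx : x ∈ A + B)
    (hAB : #(A + B) ≤ #A) : #B ≤ #{p ∈ A ×ˢ B | p.1 + p.2 = x} := by
  have hsub_mem : ∀ b ∈ B, x - b ∈ A := by
    intro b hb
    have htrans : A + {b} = A + B :=
      eq_of_subset_of_card_le (add_subset_add_left (singleton_subset_iff.2 hb))
        (by rwa [card_add_singleton])
    rw [← htrans, add_singleton] at hx
    obtain ⟨a, ha, rfl⟩ := mem_image.1 hx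
    simpa using ha
  refine card_le_card_of_injOn (fun b => (x - b, b)) (fun b hb => ?_) fun b _ c _ h => ?_
  · simp [hsub_mem b hb, mem_coe.1 hb]
  · exact congrArg Prod.snd h

lemma card_filter_add_eq_addDysonETransform_le (e : G) (A B : Finset G) (x : G) :
    #{p ∈ (addDysonETransform e (A, B)).1 ×ˢ (addDysonETransform e (A, B)).2 | p.1 + p.2 = x}
      ≤ #{p ∈ A ×ˢ B | p.1 + p.2 = x} := by
  -- pairs leaving `A` are reflected to `(e + b, -e + a)`, whose second coordinate is outside `B'`
  let f : G × G → G × G := fun p => if p.1 ∈ A then p else (e + p.2, -e + p.1)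
  refine card_le_card_of_injOn f (fun p hp => ?_) fun p hp q hq hpq => ?_
  · simp only [coe_filter, mem_product, Set.mem_ofPred_eq, mem_addDysonETransform_fst,
      mem_addDysonETransform_snd] at hp
    obtain ⟨⟨hp₁, hp₂, hep₂⟩, hsum⟩ := hp
    by_cases hpA : p.1 ∈ A
    · simp [f, hpA, hp₂, hsum]
    · simp only [f, hpA, if_false, coe_filter, mem_product, Set.mem_ofPred_eq]
      refine ⟨⟨hep₂, hp₁.resolve_left hpA⟩, ?_⟩
      rw [← hsum]
      abel
  · simp only [coe_filter, mem_product, Set.mem_ofPred_eq, mem_addDysonETransform_fst,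
      mem_addDysonETransform_snd] at hp hq
    obtain ⟨⟨-, -, hep₂⟩, -⟩ := hp
    obtain ⟨⟨-, -, heq₂⟩, -⟩ := hq
    by_cases hpA : p.1 ∈ A <;> by_cases hqA : q.1 ∈ A <;>
      simp only [f, hpA, hqA, if_true, if_false] at hpq
    · exact hpq
    · exact absurd (by simpa [hpq] using hep₂) hqA
    · exact absurd (by simpa [← hpq] using heq₂) hpA
    · obtain ⟨h₁, h₂⟩ := Prod.mk.inj hpq
      exact Prod.ext (add_left_cancel h₂) (add_left_cancel h₁)

theorem card_add_card_le_card_add_add_card_filter_add_eq {A B : Finset G} {x : G}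
    (hx : x ∈ A + B) : #A + #B ≤ #(A + B) + #{p ∈ A ×ˢ B | p.1 + p.2 = x} := by
  induction hB : #B using Nat.strong_induction_on generalizing A B with
  | _ n ih =>
    subst hB
    obtain ⟨a₁, ha₁, b₁, hb₁, rfl⟩ := mem_add.1 hx
    by_cases hAB : #(A + B) ≤ #A
    · have := card_le_card_filter_add_eq_of_card_add_le hx hAB
      have := card_le_card_add_right (s := A) ⟨b₁, hb₁⟩
      omega
    obtain ⟨a, ha, b, hb, hab⟩ : ∃ a ∈ A, ∃ b ∈ B, a - b₁ + b ∉ A := by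
      by_contra! hdeg
      refine hAB (card_le_card_of_injOn (· - b₁) ?_ (fun _ _ _ _ h => sub_left_inj.1 h))
      rintro _ hy
      obtain ⟨a, ha, b, hb, rfl⟩ := mem_add.1 (mem_coe.1 hy)
      simpa [sub_add_eq_add_sub] using hdeg a ha b hb
    set T := addDysonETransform (a - b₁) (A, B)
    have hb₁T : b₁ ∈ T.2 := mem_addDysonETransform_snd.2 ⟨hb₁, by simpa using ha⟩
    have hT : #T.2 < #B :=
      card_lt_card ⟨inter_subset_left, fun h => hab (mem_addDysonETransform_snd.1 (h hb)).2⟩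
    have hxT : a₁ + b₁ ∈ T.1 + T.2 := add_mem_add (mem_union_left _ ha₁) hb₁T
    calc #A + #B = #T.1 + #T.2 := (addDysonETransform.card (a - b₁) (A, B)).symm
      _ ≤ #(T.1 + T.2) + #{p ∈ T.1 ×ˢ T.2 | p.1 + p.2 = a₁ + b₁} := ih _ hT hxT rfl
      _ ≤ #(A + B) + #{p ∈ A ×ˢ B | p.1 + p.2 = a₁ + b₁} :=
        add_le_add (card_le_card (addDysonETransform.subset _ _))
          (card_filter_add_eq_addDysonETransform_le _ _ _ _)

end Finset

theorem stmt_0_general {G : Type*} [AddCommGroup G] [DecidableEq G]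
    (A B : Finset G) (k : ℕ)
    (h : (A + B).card + k ≤ A.card + B.card) :
    ∀ x ∈ A + B, k ≤ ((A ×ˢ B).filter (fun p => p.1 + p.2 = x)).card := fun x hx => by
  have := card_add_card_le_card_add_add_card_filter_add_eq hx
  omega

theorem stmt_0 {G : Type*} [AddCommGroup G] [DecidableEq G]
    (A B : Finset G) (hA : A.Nonempty) (hB : B.Nonempty) (k : ℕ)
    (h : (A + B).card + k ≤ A.card + B.card) :
    ∀ x ∈ A + B, k ≤ ((A ×ˢ B).filter (fun p => p.1 + p.2 = x)).card :=
  stmt_0_general A B k h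
end

section
/- Let G be a finite abelian group of order n and let S be a sequence over G of length n - 1. If S has no nonempty zero-sum subsequence, then S = g^{n-1} for some generator g of G (in particular G is cyclic). -/
/-!
If `s₁, …, s_{n-1}` is zero-sum free, its `n` partial sums `0, s₁, s₁ + s₂, …` are pairwise
distinct (the difference of two of them is the sum of a nonempty block), so they exhaust `G`.
Listing two entries `a`, `b` of `S` first as `b, a, …`, the element `a` is then some partial sum;
it cannot be `0`, nor `b + a + r₁ + ⋯ + r_k` (that would make `b + r₁ + ⋯ + r_k` vanish), so
`a = b`. Hence `S = g^{n-1}`, and the partial sums `k • g` exhaust `G`.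
-/

def Multiset.ZeroSumFree {G : Type*} [AddCommMonoid G] (S : Multiset G) : Prop :=
  ∀ T : Multiset G, T ≤ S → T ≠ 0 → T.sum ≠ 0

namespace Multiset.ZeroSumFree

open Function

theorem sum_take_injective {G : Type*} [AddCancelCommMonoid G] {l : List G}
    (hl : ZeroSumFree (l : Multiset G)) :
    Injective fun k : Fin (l.length + 1) => (l.take k).sum := by
  refine Injective.of_lt_imp_ne fun k k' hkk' heq => ?_
  obtain ⟨t, ht⟩ : l.take k <+: l.take k' :=
    (List.prefix_take_le_iff (by omega)).2 hkk'.le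
  have ht_ne : t ≠ [] := by
    rintro rfl
    have := congrArg List.length ht
    simp only [List.append_nil, List.length_take] at this
    omega
  have ht_sub : t.Sublist l :=
    (List.sublist_append_right _ t).trans (ht ▸ List.take_sublist _ _)
  refine hl t (coe_le.2 ht_sub.subperm) (by simpa using ht_ne) ?_
  have := congrArg List.sum ht
  rw [List.sum_append] at this
  simpa [← heq] using this

theorem exists_sum_take_eq {G : Type*} [AddCommGroup G] [Fintype G] {l : List G}
    (hl : ZeroSumFree (l : Multiset G)) (hlen : l.length + 1 = Fintype.card G) (x : G) :
    ∃ k : ℕ, (l.take k).sum = x := by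
  have hbij := (Fintype.bijective_iff_injective_and_card _).2
    ⟨hl.sum_take_injective, by simpa using hlen⟩
  obtain ⟨k, hk⟩ := hbij.surjective x
  exact ⟨k, hk⟩

theorem eq_of_mem {G : Type*} [AddCommGroup G] [Fintype G] {S : Multiset G} (hS : ZeroSumFree S)
    (hcard : card S + 1 = Fintype.card G) {a b : G} (ha : a ∈ S) (hb : b ∈ S) : a = b := by
  classical
  by_contra hab
  obtain ⟨R, rfl⟩ : ∃ R, S = b ::ₘ a ::ₘ R :=
    ⟨(S.erase b).erase a, by rw [cons_erase ((mem_erase_of_ne hab).2 ha), cons_erase hb]⟩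
  have hl : ((b :: a :: R.toList : List G) : Multiset G) = b ::ₘ a ::ₘ R := by
    rw [← cons_coe, ← cons_coe, coe_toList]
  obtain ⟨j, hj⟩ := exists_sum_take_eq (hl ▸ hS) (by simpa [← hl] using hcard) a
  rcases j with _ | _ | k
  · exact hS {a} (singleton_le.2 (by simp)) (singleton_ne_zero a) (by simpa using hj.symm)
  · exact hab (by simpa using hj.symm)
  · refine hS (b ::ₘ (R.toList.take k : List G)) ?_ cons_ne_zero ?_
    · refine cons_le_cons b ((coe_le.2 (List.take_sublist _ _).subperm).trans ?_)
      simpa using le_cons_self R a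
    · simp only [List.take_succ_cons, List.sum_cons] at hj
      simp only [sum_cons, sum_coe]
      rw [← add_right_inj a]
      simpa [add_left_comm] using hj

end Multiset.ZeroSumFree

theorem stmt_4 {G : Type*} [AddCommGroup G] [Fintype G] (S : Multiset G)
    (hS : Multiset.card S = Fintype.card G - 1)
    (h : ∀ T : Multiset G, T ≤ S → T ≠ 0 → T.sum ≠ 0) :
    ∃ g : G, AddSubgroup.zmultiples g = ⊤ ∧
      S = Multiset.replicate (Fintype.card G - 1) g := by
  replace h : S.ZeroSumFree := h
  have hcard : Multiset.card S + 1 = Fintype.card G := by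
    have := Fintype.card_pos (α := G); omega
  obtain ⟨g, hg⟩ : ∃ g : G, S = Multiset.replicate (Fintype.card G - 1) g := by
    rcases S.empty_or_exists_mem with rfl | ⟨g, hg⟩
    · exact ⟨0, by simp [← hS]⟩
    · exact ⟨g, hS ▸ Multiset.eq_replicate_card.2 fun b hb => h.eq_of_mem hcard hb hg⟩
  refine ⟨g, (AddSubgroup.eq_top_iff' _).2 fun x => ?_, hg⟩
  have hl : (List.replicate (Fintype.card G - 1) g : Multiset G) = S := by
    rw [Multiset.coe_replicate, hg]
  obtain ⟨k, hk⟩ := (hl ▸ h : Multiset.ZeroSumFree _).exists_sum_take_eq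
    (by rw [List.length_replicate]; omega) x
  rw [List.take_replicate, List.sum_replicate] at hk
  exact hk ▸ AddSubgroup.nsmul_mem_zmultiples _ _
end

section
/- Let n ≥ 1, let g, h ∈ C_n with g a generator, and let S = g^l h^{n-l} be a sequence over C_n with l ≥ n - l ≥ 1. Suppose the set of nonempty subsequence sums of h^{n-l} equals {g, 2g, …, (n-l-1)g} ∪ {b₀} for some b₀ ∈ C_n, and suppose there is a unique r ∈ [1, n] such that some sub-multiset of S of size r sums to zero. Then either S = g^{n-1}h, or n is odd, h = ((n+1)/2)·g, and S = g^{n-2}h². -/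
/-!
Put m = n - l. Since g is one of the multiples h, 2h, …, mh, say g = a h, the element h generates
as well, so j ↦ j h is injective on [0, n). If k a ≤ m, then (k + 1) a ≤ 2m ≤ n, and since
(k + 1) g = (k + 1) a h is again one of h, …, mh, injectivity forces (k + 1) a ≤ m. Hence
(m - 1) a ≤ m, which leaves h = g, or m = 2 and g = 2h; in the latter case g generates only if
n is odd, and then h = ((n + 1) / 2) g.
-/

section AddLeftCancelMonoid

variable {G : Type*} [AddLeftCancelMonoid G]

lemma eq_of_nsmul_eq_nsmul_of_le_addOrderOf {h : G} {x j : ℕ} (hx : x ≤ addOrderOf h)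
    (hj1 : 1 ≤ j) (hj : j < addOrderOf h) (hxj : x • h = j • h) : x = j := by
  have hmod : x % addOrderOf h = j := by
    rw [← Nat.mod_eq_of_lt hj]; exact nsmul_eq_nsmul_iff_modEq.1 hxj
  rcases hx.lt_or_eq with hx | rfl
  · rwa [Nat.mod_eq_of_lt hx] at hmod
  · rw [Nat.mod_self] at hmod; omega

lemma eq_or_eq_two_nsmul_of_nsmul_mem {g h : G} {m : ℕ} (hm : 2 ≤ m)
    (horder : 2 * m ≤ addOrderOf h)
    (hsub : ∀ k, 1 ≤ k → k ≤ m - 1 → ∃ j, 1 ≤ j ∧ j ≤ m ∧ k • g = j • h) :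
    g = h ∨ (m = 2 ∧ g = 2 • h) := by
  obtain ⟨a, ha1, ham, hga⟩ := hsub 1 le_rfl (by omega)
  rw [one_nsmul] at hga
  have hbound : ∀ k, 1 ≤ k → k ≤ m - 1 → k * a ≤ m := by
    intro k hk1 hkm
    induction k, hk1 using Nat.le_induction with
    | base => omega
    | succ k hk1 ih =>
      obtain ⟨j, hj1, hjm, hj⟩ := hsub (k + 1) (by omega) hkm
      have hle : (k + 1) * a ≤ addOrderOf h := by
        have := ih (by omega); rw [add_one_mul]; omega
      rw [hga, ← mul_nsmul'] at hj
      have := eq_of_nsmul_eq_nsmul_of_le_addOrderOf hle hj1 (by omega) hj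
      omega
  obtain rfl | ha2 := (by omega : a = 1 ∨ 2 ≤ a)
  · exact .inl (by rw [hga, one_nsmul])
  · have := hbound (m - 1) (by omega) le_rfl
    have := Nat.mul_le_mul_left (m - 1) ha2
    obtain rfl : a = 2 := by omega
    exact .inr ⟨by omega, hga⟩

end AddLeftCancelMonoid

section AddMonoid

variable {G : Type*} [AddMonoid G]

lemma odd_of_addOrderOf_two_nsmul {h : G} (hpos : 0 < addOrderOf h)
    (horder : addOrderOf (2 • h) = addOrderOf h) : Odd (addOrderOf h) := by
  rw [addOrderOf_nsmul' h two_ne_zero, Nat.div_eq_self] at horder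
  exact Nat.coprime_two_left.1 <| Nat.coprime_comm.1 <| horder.resolve_left hpos.ne'

lemma eq_nsmul_two_nsmul_of_odd {h : G} (hodd : Odd (addOrderOf h)) :
    h = ((addOrderOf h + 1) / 2) • 2 • h := by
  obtain ⟨j, hj⟩ := hodd
  rw [← mul_nsmul', hj, show (2 * j + 1 + 1) / 2 * 2 = (2 * j + 1) + 1 by omega, add_nsmul,
    ← hj, addOrderOf_nsmul_eq_zero, zero_add, one_nsmul]

end AddMonoid

lemma ZMod.addOrderOf_eq_of_nsmul_eq {n : ℕ} {g h : ZMod n} (hg : addOrderOf g = n) (a : ℕ)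
    (hgh : g = a • h) : addOrderOf h = n := by
  have hdvd : addOrderOf g ∣ addOrderOf h :=
    addOrderOf_dvd_of_mem_zmultiples ⟨a, by simp only [hgh, natCast_zsmul]⟩
  rw [hg] at hdvd
  exact Nat.dvd_antisymm (addOrderOf_dvd_of_nsmul_eq_zero (by simp)) hdvd

theorem stmt_7_general (n : ℕ) (g h : ZMod n) (hg : addOrderOf g = n)
    (l : ℕ) (hl1 : 1 ≤ n - l) (hl2 : n - l ≤ l)
    (S : Multiset (ZMod n))
    (hS : S = Multiset.replicate l g + Multiset.replicate (n - l) h)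
    (b₀ : ZMod n)
    (hsums : {x : ZMod n | ∃ k : ℕ, 1 ≤ k ∧ k ≤ n - l ∧ x = k • h} =
      {x : ZMod n | ∃ k : ℕ, 1 ≤ k ∧ k ≤ n - l - 1 ∧ x = k • g} ∪ {b₀}) :
    S = Multiset.replicate (n - 1) g + {h} ∨
      (Odd n ∧ h = ((n + 1) / 2) • g ∧
        S = Multiset.replicate (n - 2) g + Multiset.replicate 2 h) := by
  subst hS
  obtain hm | hm : n - l = 1 ∨ 2 ≤ n - l := by omega
  · exact .inl (by rw [hm, show l = n - 1 by omega, Multiset.replicate_one])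
  have hsub : ∀ k, 1 ≤ k → k ≤ n - l - 1 → ∃ j, 1 ≤ j ∧ j ≤ n - l ∧ k • g = j • h := by
    intro k hk1 hkm
    have hk : k • g ∈ {x : ZMod n | ∃ j : ℕ, 1 ≤ j ∧ j ≤ n - l ∧ x = j • h} :=
      hsums ▸ .inl ⟨k, hk1, hkm, rfl⟩
    exact hk
  obtain ⟨a, -, -, hga⟩ := hsub 1 le_rfl (by omega)
  have hh : addOrderOf h = n := ZMod.addOrderOf_eq_of_nsmul_eq hg a (by simpa using hga)
  rcases eq_or_eq_two_nsmul_of_nsmul_mem hm (by omega) hsub with rfl | ⟨hm2, rfl⟩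
  · left
    rw [← Multiset.replicate_one, ← Multiset.replicate_add, ← Multiset.replicate_add]
    congr 1; omega
  · have hodd : Odd n := hh ▸ odd_of_addOrderOf_two_nsmul (by omega) (hg.trans hh.symm)
    have hhg := eq_nsmul_two_nsmul_of_odd (h := h) (hh.symm ▸ hodd)
    rw [hh] at hhg
    exact .inr ⟨hodd, hhg, by rw [hm2, show l = n - 2 by omega]⟩

theorem stmt_7 (n : ℕ) (hn : 1 ≤ n) (g h : ZMod n) (hg : addOrderOf g = n)
    (l : ℕ) (hl1 : 1 ≤ n - l) (hl2 : n - l ≤ l) (hln : l ≤ n)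
    (S : Multiset (ZMod n))
    (hS : S = Multiset.replicate l g + Multiset.replicate (n - l) h)
    (b₀ : ZMod n)
    (hsums : {x : ZMod n | ∃ k : ℕ, 1 ≤ k ∧ k ≤ n - l ∧ x = k • h} =
      {x : ZMod n | ∃ k : ℕ, 1 ≤ k ∧ k ≤ n - l - 1 ∧ x = k • g} ∪ {b₀})
    (huniq : ∃! r : ℕ, r ∈ Finset.Icc 1 n ∧
      ∃ T ≤ S, Multiset.card T = r ∧ T.sum = 0) :
    S = Multiset.replicate (n - 1) g + {h} ∨
      (Odd n ∧ h = ((n + 1) / 2) • g ∧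
        S = Multiset.replicate (n - 2) g + Multiset.replicate 2 h) :=
  stmt_7_general n g h hg l hl1 hl2 S hS b₀ hsums
end

section
/- Let G be an abelian group of even order n, let g, h ∈ G with ord(g) = n/2 and h ≠ g, and let S = g^l h^{n-l} with n - l ≥ 2 and l ≥ n/2. If n/2 is the unique integer r ∈ [1, n] such that some sub-multiset of S of size r sums to zero, then n - l is odd, h ∉ ⟨g⟩, and 2h = 2g. -/
/-!
Any zero-sum subsequence `a·g + b·h` of `S` must have length `m = ord g = n/2`. Since `⟨g⟩` has
index `2`, `2h ∈ ⟨g⟩`; writing `j·h = c·g` with `c < m` for `j ∈ {1, 2}`, the subsequence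
`(m - c)·g + j·h` (or `j·h` itself when `c = 0`) sums to zero, so its length forces `c = j`,
i.e. `j·h = j·g`. For `j = 1` this contradicts `h ≠ g`, so `h ∉ ⟨g⟩`; for `j = 2` it gives
`2h = 2g`. Finally, if `n - l` were even then `2h = 2g` would make all of `S` a zero-sum
subsequence of length `n ≠ m`.
-/

open Multiset

section

variable {G : Type*} [AddCommGroup G]

def ZeroSumsHaveCard (S : Multiset G) (m : ℕ) : Prop :=
  ∀ T ≤ S, T ≠ 0 → T.sum = 0 → card T = m

theorem zeroSumsHaveCard_of_forall_mem_Icc {S : Multiset G} {m : ℕ}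
    (hS : ∀ r ∈ Finset.Icc 1 (card S), (∃ T ≤ S, card T = r ∧ T.sum = 0) → r = m) :
    ZeroSumsHaveCard S m := fun T hT hT0 hsum =>
  hS _ (Finset.mem_Icc.mpr ⟨card_pos.mpr hT0, card_le_card hT⟩) ⟨T, hT, rfl, hsum⟩

namespace ZeroSumsHaveCard

variable {g h : G} {l k m a b : ℕ}
  (hS : ZeroSumsHaveCard (replicate l g + replicate k h) m)
include hS

theorem add_eq_of_sum_eq_zero (ha : a ≤ l) (hb : b ≤ k) (hab : 0 < a + b)
    (hsum : a • g + b • h = 0) : a + b = m := by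
  have hT := hS (replicate a g + replicate b h)
    (add_le_add (replicate_le_replicate g |>.mpr ha) (replicate_le_replicate h |>.mpr hb))
    (by rw [← card_pos]; simpa using hab) (by simpa using hsum)
  simpa using hT

variable [Finite G]

theorem nsmul_eq_nsmul_of_mem_zmultiples (hm : addOrderOf g = m) (hml : m ≤ l) {j : ℕ}
    (hj : 0 < j) (hjk : j ≤ k) (hjh : j • h ∈ AddSubgroup.zmultiples g) : j • h = j • g := by
  classical
  obtain ⟨c, hc, hcg⟩ : ∃ c < m, c • g = j • h := by
    simpa [← hm] using mem_zmultiples_iff_mem_range_addOrderOf.mp hjh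
  have hmg : m • g = 0 := hm ▸ addOrderOf_nsmul_eq_zero g
  rcases Nat.eq_zero_or_pos c with rfl | hc0
  · have hjm : 0 + j = m :=
      hS.add_eq_of_sum_eq_zero (Nat.zero_le _) hjk (by omega) (by simp [← hcg])
    rw [← hcg, zero_smul, ← zero_add j, hjm, hmg]
  · have hsum : (m - c) • g + j • h = 0 := by
      rw [← hcg, ← add_nsmul, Nat.sub_add_cancel hc.le, hmg]
    have hjc : m - c + j = m := hS.add_eq_of_sum_eq_zero (by omega) hjk (by omega) hsum
    rw [← hcg, show c = j by omega]

theorem odd_of_two_nsmul_eq (hm : addOrderOf g = m) (hlk : l + k = 2 * m)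
    (h2 : 2 • h = 2 • g) : Odd k := by
  by_contra hk
  obtain ⟨i, rfl⟩ := Nat.not_odd_iff_even.mp hk
  have hkh : (i + i) • h = (i + i) • g := by
    rw [← two_mul, mul_comm, mul_nsmul', h2, ← mul_nsmul']
  have hsum : l • g + (i + i) • h = 0 := by
    rw [hkh, ← add_nsmul, hlk, mul_comm, mul_nsmul, ← hm, addOrderOf_nsmul_eq_zero, nsmul_zero]
  have hm0 : 0 < m := hm ▸ addOrderOf_pos g
  have := hS.add_eq_of_sum_eq_zero le_rfl le_rfl (by omega) hsum
  omega

end ZeroSumsHaveCard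

theorem two_nsmul_mem_zmultiples [Finite G] {g : G} (hG : Nat.card G = 2 * addOrderOf g)
    (x : G) : 2 • x ∈ AddSubgroup.zmultiples g := by
  have hidx : (AddSubgroup.zmultiples g).index = 2 := by
    have := (AddSubgroup.zmultiples g).index_mul_card
    rw [Nat.card_zmultiples, hG] at this
    exact Nat.eq_of_mul_eq_mul_right (addOrderOf_pos g) this
  simpa [hidx] using (AddSubgroup.zmultiples g).nsmul_index_mem x

end

theorem stmt_8 {G : Type*} [AddCommGroup G] [Fintype G]
    (n : ℕ) (hn : Fintype.card G = n) (hneven : Even n)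
    (g h : G) (hg : addOrderOf g = n / 2) (hgh : h ≠ g)
    (l : ℕ) (hl1 : 2 ≤ n - l) (hl2 : n / 2 ≤ l)
    (S : Multiset G)
    (hS : S = Multiset.replicate l g + Multiset.replicate (n - l) h)
    (huniq : ∀ r ∈ Finset.Icc 1 n,
      ((∃ T ≤ S, Multiset.card T = r ∧ T.sum = 0) ↔ r = n / 2)) :
    Odd (n - l) ∧ h ∉ AddSubgroup.zmultiples g ∧ 2 • h = 2 • g := by
  have hn2 : n = 2 * (n / 2) := (Nat.two_mul_div_two_of_even hneven).symm
  have hcard : card S = n := by simp only [hS, card_add, card_replicate]; omega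
  have hzero : ZeroSumsHaveCard (replicate l g + replicate (n - l) h) (n / 2) :=
    hS ▸ zeroSumsHaveCard_of_forall_mem_Icc fun r hr => (huniq r (hcard ▸ hr)).mp
  have h2h : 2 • h = 2 • g :=
    hzero.nsmul_eq_nsmul_of_mem_zmultiples hg hl2 two_pos hl1
      (two_nsmul_mem_zmultiples (by rw [Nat.card_eq_fintype_card, hn, hg, ← hn2]) h)
  refine ⟨hzero.odd_of_two_nsmul_eq hg (by omega) h2h, fun hh => hgh ?_, h2h⟩
  simpa using hzero.nsmul_eq_nsmul_of_mem_zmultiples hg hl2 one_pos (by omega) (by simpa using hh)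
end

section
/- Let G be a finite abelian group with a nontrivial proper subgroup H such that 2|H| < |G|, and let S be a sequence over G of length |G| containing an element g with ord(g) = |H|, g generating H, multiplicity of g in S at least |H|, and g the only element of H in supp(S). Then S has a zero-sum subsequence of length strictly greater than |H|. -/
/-!
Set aside `ord g = |H|` copies of `g`. Pigeonhole on prefix sums shows that every `|G/H|` elements
contain a nonempty block summing to zero modulo `H`; removing such blocks one after another leaves
fewer than `|G/H|` elements, so the removed blocks form a subsequence `U` with sum in `H = ⟨g⟩` and
`|U| ≥ |G| - |H| - |G/H| + 1`. Between `1` and `ord g` of the set-aside copies of `g` complete `U`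
to a zero-sum subsequence, of length at least `|G| - |H| - |G/H| + 2`, which exceeds `|H|` because
`|G| = |G/H| |H|` with `|H| ≥ 2` and `|G/H| ≥ 3`.
-/

open Multiset AddSubgroup

theorem exists_pos_le_addOrderOf_add_nsmul_eq_zero {G : Type*} [AddGroup G] [Finite G]
    {g x : G} (hx : x ∈ zmultiples g) : ∃ t, 0 < t ∧ t ≤ addOrderOf g ∧ x + t • g = 0 := by
  classical
  obtain ⟨i, hi, hig⟩ := Finset.mem_image.1 <|
    mem_zmultiples_iff_mem_range_addOrderOf.1 (sub_mem (neg_mem hx) (mem_zmultiples g))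
  refine ⟨i + 1, i.succ_pos, Finset.mem_range.1 hi, ?_⟩
  rw [succ_nsmul, hig, sub_add_cancel, add_neg_cancel]

namespace Multiset

variable {α Q : Type*} [DecidableEq α] [AddCommGroup Q] [Finite Q]

theorem exists_le_ne_zero_sum_map_eq_zero (f : α → Q) (A : Multiset α)
    (hA : Nat.card Q ≤ card A) : ∃ B ≤ A, B ≠ 0 ∧ (B.map f).sum = 0 := by
  cases nonempty_fintype Q
  obtain ⟨l, rfl⟩ : ∃ l : List α, (l : Multiset α) = A := Quotient.exists_rep A
  rw [coe_card, Nat.card_eq_fintype_card] at hA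
  have hcard : Fintype.card Q < Fintype.card (Fin (l.length + 1)) := by
    rwa [Fintype.card_fin, Nat.lt_succ_iff]
  obtain ⟨i, j, hij, hsum⟩ := Fintype.exists_ne_map_eq_of_card_lt
    (fun i : Fin (l.length + 1) => ((l.take i).map f).sum) hcard
  wlog hlt : i < j generalizing i j
  · exact this j i hij.symm hsum.symm (lt_of_le_of_ne (not_lt.1 hlt) hij.symm)
  have hprefix : (l.take i : Multiset α) ≤ l.take j :=
    (List.take_sublist_take_left hlt.le).subperm
  have hsplit : (l.take j : Multiset α) = (l.take j - l.take i) + l.take i :=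
    (tsub_add_cancel_of_le hprefix).symm
  refine ⟨l.take j - l.take i, tsub_le_self.trans (List.take_sublist _ _).subperm, ?_, ?_⟩
  · rw [← card_pos, card_sub hprefix]
    simp only [coe_card, List.length_take]
    omega
  · rwa [← sum_coe, ← sum_coe, ← map_coe, ← map_coe, hsplit, map_add, sum_add,
      right_eq_add] at hsum

theorem exists_le_sum_map_eq_zero_card_lt (f : α → Q) (A : Multiset α) :
    ∃ U ≤ A, (U.map f).sum = 0 ∧ card A < card U + Nat.card Q := by
  induction A using strongInductionOn with
  | ih A ih =>
    by_cases hA : card A < Nat.card Q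
    · exact ⟨0, zero_le A, by simp, by simpa using hA⟩
    obtain ⟨B, hBA, hB0, hBsum⟩ := exists_le_ne_zero_sum_map_eq_zero f A (not_lt.1 hA)
    have hsplit : A - B + B = A := tsub_add_cancel_of_le hBA
    have hlt : A - B < A := lt_of_le_of_ne tsub_le_self fun h => hB0 (by simpa [h] using hsplit)
    obtain ⟨U, hU, hUsum, hUcard⟩ := ih (A - B) hlt
    refine ⟨U + B, hsplit ▸ add_le_add_left hU B, ?_, ?_⟩
    · rw [map_add, sum_add, hUsum, hBsum, add_zero]
    · have := congrArg card hsplit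
      rw [card_add] at this ⊢
      omega

theorem exists_zero_sum_of_replicate_addOrderOf_le {G : Type*} [AddCommGroup G]
    [Finite G] [DecidableEq G] {g : G} {A : Multiset G} (hA : replicate (addOrderOf g) g ≤ A) :
    ∃ T ≤ A, T ≠ 0 ∧ T.sum = 0 ∧
      card A + 2 ≤ card T + addOrderOf g + Nat.card (G ⧸ zmultiples g) := by
  obtain ⟨U, hU, hUsum, hUcard⟩ :=
    exists_le_sum_map_eq_zero_card_lt (QuotientAddGroup.mk' (zmultiples g))
      (A - replicate (addOrderOf g) g)
  have hUH : U.sum ∈ zmultiples g :=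
    (QuotientAddGroup.eq_zero_iff _).1 (by rwa [← map_multiset_sum] at hUsum)
  obtain ⟨t, ht0, htk, ht⟩ := exists_pos_le_addOrderOf_add_nsmul_eq_zero hUH
  refine ⟨U + replicate t g, ?_, ?_, by rw [sum_add, sum_replicate, ht], ?_⟩
  · calc U + replicate t g ≤ (A - replicate (addOrderOf g) g) + replicate (addOrderOf g) g :=
          add_le_add hU (replicate_le_replicate _ |>.2 htk)
      _ = A := tsub_add_cancel_of_le hA
  · exact card_pos.1 (by rw [card_add, card_replicate]; omega)
  · have := card_le_card hA
    rw [card_replicate] at this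
    rw [card_sub hA, card_replicate] at hUcard
    rw [card_add, card_replicate]
    omega

end Multiset

theorem stmt_12_general {G : Type*} [AddCommGroup G] [Fintype G] [DecidableEq G]
    (H : AddSubgroup G) (hbot : H ≠ ⊥)
    (hsmall : 2 * Nat.card H < Fintype.card G)
    (S : Multiset G) (hS : Multiset.card S = Fintype.card G)
    (g : G)
    (hgen : AddSubgroup.zmultiples g = H)
    (hmult : Nat.card H ≤ S.count g) :
    ∃ T : Multiset G, T ≤ S ∧ T ≠ 0 ∧ T.sum = 0 ∧ Nat.card H < Multiset.card T := by
  subst hgen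
  have hcard := card_eq_card_quotient_mul_card_addSubgroup (zmultiples g)
  rw [Nat.card_eq_fintype_card] at hcard
  have hk := (one_lt_card_iff_ne_bot _).2 hbot
  rw [Nat.card_zmultiples] at hk hcard hsmall hmult ⊢
  obtain ⟨T, hTS, hT0, hTsum, hTcard⟩ :=
    exists_zero_sum_of_replicate_addOrderOf_le (le_count_iff_replicate_le.1 hmult)
  refine ⟨T, hTS, hT0, hTsum, ?_⟩
  have hm : 2 < Nat.card (G ⧸ zmultiples g) := by
    rw [hcard] at hsmall
    exact Nat.lt_of_mul_lt_mul_right hsmall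
  rw [hS, hcard] at hTcard
  -- with `k = addOrderOf g`, `m = |G ⧸ zmultiples g|`: `|T| ≥ mk + 2 - k - m = 2k - 1 + (m - 3)(k - 1)`
  nlinarith

theorem stmt_12 {G : Type*} [AddCommGroup G] [Fintype G] [DecidableEq G]
    (H : AddSubgroup G) (hbot : H ≠ ⊥) (htop : H ≠ ⊤)
    (hsmall : 2 * Nat.card H < Fintype.card G)
    (S : Multiset G) (hS : Multiset.card S = Fintype.card G)
    (g : G) (hord : addOrderOf g = Nat.card H)
    (hgen : AddSubgroup.zmultiples g = H)
    (hmult : Nat.card H ≤ S.count g)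
    (honly : ∀ x ∈ S, x ∈ H → x = g) :
    ∃ T : Multiset G, T ≤ S ∧ T ≠ 0 ∧ T.sum = 0 ∧ Nat.card H < Multiset.card T :=
  stmt_12_general H hbot hsmall S hS g hgen hmult
end

section
/- Let G be an abelian group, g ∈ G a generator of G with |G| = n, and suppose S = g^{n-1}g' for some g' ∈ G. Then all nonempty zero-sum subsequences of S have the same length. (If g' = kg with k ∈ [1,n], the unique zero-sum length is n - k + 1.) -/
/-!
Let `g` have order `n`. A sub-multiset of `g^{n-1} g'` is either `g^j` or `g^j g'` with `j ≤ n - 1`.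
No `g^j` with `0 < j < n` sums to zero, and if `g' = k • g` with `1 ≤ k ≤ n`, then `g^j g'` sums to
zero exactly when `n ∣ j + k`; as `0 < j + k < 2n` this forces `j + k = n`, i.e. the length is
`n - k + 1`. Such a `k` exists because `g'` is a multiple of `g`.
-/

theorem Multiset.eq_replicate_or_eq_cons_replicate_of_le_cons_replicate {α : Type*}
    {a b : α} {m : ℕ} {T : Multiset α} (h : T ≤ b ::ₘ replicate m a) :
    (∃ j ≤ m, T = replicate j a) ∨ ∃ j ≤ m, T = b ::ₘ replicate j a := by
  classical
  by_cases hb : b ∈ T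
  · obtain ⟨j, hj, hT⟩ := le_replicate_iff.1 (erase_le_iff_le_cons.2 h)
    exact Or.inr ⟨j, hj, by rw [← cons_erase hb, hT]⟩
  · exact Or.inl (le_replicate_iff.1 ((le_cons_of_notMem hb).1 h))

theorem eq_addOrderOf_of_nsmul_eq_zero {G : Type*} [AddMonoid G] {g : G} {m : ℕ}
    (h0 : m ≠ 0) (hlt : m < 2 * addOrderOf g) (h : m • g = 0) : m = addOrderOf g :=
  Nat.eq_of_dvd_of_lt_two_mul h0 (addOrderOf_dvd_of_nsmul_eq_zero h) hlt

theorem card_eq_of_le_cons_replicate_of_sum_eq_zero {G : Type*} [AddCommMonoid G] {g : G}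
    {k : ℕ} (hk1 : 1 ≤ k) (hkn : k ≤ addOrderOf g) {T : Multiset G}
    (hT : T ≤ k • g ::ₘ Multiset.replicate (addOrderOf g - 1) g) (hT0 : T ≠ 0)
    (hsum : T.sum = 0) : Multiset.card T = addOrderOf g - k + 1 := by
  rcases Multiset.eq_replicate_or_eq_cons_replicate_of_le_cons_replicate hT with
    ⟨j, hj, rfl⟩ | ⟨j, hj, rfl⟩
  · have hj0 : j ≠ 0 := by rintro rfl; exact hT0 rfl
    rw [Multiset.sum_replicate] at hsum
    exact absurd hsum (nsmul_ne_zero_of_lt_addOrderOf hj0 (by omega))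
  · rw [Multiset.sum_cons, Multiset.sum_replicate, ← add_nsmul] at hsum
    have := eq_addOrderOf_of_nsmul_eq_zero (by omega) (by omega) hsum
    simp only [Multiset.card_cons, Multiset.card_replicate]
    omega

theorem exists_nsmul_eq_of_mem_zmultiples {G : Type*} [AddGroup G] [Finite G] {g x : G}
    (hx : x ∈ AddSubgroup.zmultiples g) : ∃ k, 1 ≤ k ∧ k ≤ addOrderOf g ∧ x = k • g := by
  classical
  obtain ⟨i, hi, rfl⟩ := Finset.mem_image.1 (mem_zmultiples_iff_mem_range_addOrderOf.1 hx)
  rcases Nat.eq_zero_or_pos i with rfl | hi0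
  · exact ⟨addOrderOf g, addOrderOf_pos g, le_rfl, by rw [zero_smul, addOrderOf_nsmul_eq_zero]⟩
  · exact ⟨i, hi0, (Finset.mem_range.1 hi).le, rfl⟩

theorem stmt_13 {G : Type*} [AddCommGroup G] [Fintype G] (n : ℕ)
    (hn : Fintype.card G = n) (g g' : G) (hg : AddSubgroup.zmultiples g = ⊤)
    (S : Multiset G) (hS : S = Multiset.replicate (n - 1) g + {g'}) :
    (∃ r : ℕ, ∀ T : Multiset G, T ≤ S → T ≠ 0 → T.sum = 0 →
        Multiset.card T = r) ∧
      ∀ k : ℕ, 1 ≤ k → k ≤ n → g' = k • g →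
        ∀ T : Multiset G, T ≤ S → T ≠ 0 → T.sum = 0 →
          Multiset.card T = n - k + 1 := by
  have hord : addOrderOf g = n := by
    rw [← hn, ← Nat.card_eq_fintype_card]
    exact addOrderOf_eq_card_of_forall_mem_zmultiples (fun x => hg ▸ AddSubgroup.mem_top x)
  have hS' : S = g' ::ₘ Multiset.replicate (addOrderOf g - 1) g := by
    rw [hS, hord, Multiset.add_comm, Multiset.singleton_add]
  have hlength : ∀ k : ℕ, 1 ≤ k → k ≤ n → g' = k • g →
      ∀ T : Multiset G, T ≤ S → T ≠ 0 → T.sum = 0 → Multiset.card T = n - k + 1 := by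
    rintro k hk1 hkn rfl T hT hT0 hsum
    rw [hS'] at hT
    subst hord
    exact card_eq_of_le_cons_replicate_of_sum_eq_zero hk1 hkn hT hT0 hsum
  obtain ⟨k, hk1, hkn, hk⟩ := exists_nsmul_eq_of_mem_zmultiples (hg ▸ AddSubgroup.mem_top g')
  exact ⟨⟨n - k + 1, hlength k hk1 (hord ▸ hkn) hk⟩, hlength⟩
end

section
/- Let n be even, let g be a generator of C_n, let x ∈ [0, n/2 - 1] with n/2 - x odd, and let S = g^{n/2 + x}·(((n+2)/2)g)^{n/2 - x}. Then every nonempty zero-sum subsequence of S has length exactly n/2. -/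
/-!
Write `n = 2m`. A sub-multiset `T` of `S` consists of `a ≤ m + x` copies of `g` and `b ≤ m - x`
copies of `(m + 1) • g`, so `T.sum = 0` means `2m ∣ a + b(m + 1)`, and
`a + b(m + 1) ≡ a + b + [b odd] • m (mod 2m)` with `0 < a + b ≤ 2m`. If `b` is even this forces
`a + b = 2m`, i.e. `b = m - x`, which is odd; so `b` is odd and `a + b + m = 2m`.
-/

theorem Multiset.exists_eq_replicate_add_replicate_of_le {α : Type*} [DecidableEq α] {u v : α}
    (huv : u ≠ v) {p q : ℕ} {T : Multiset α} (hT : T ≤ replicate p u + replicate q v) :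
    ∃ a ≤ p, ∃ b ≤ q, T = replicate a u + replicate b v := by
  have hcount (y : α) := count_le_of_le y hT
  refine ⟨T.count u, by simpa [count_replicate, huv, huv.symm] using hcount u,
    T.count v, by simpa [count_replicate, huv, huv.symm] using hcount v, ?_⟩
  ext y
  specialize hcount y
  simp only [count_add, count_replicate] at hcount ⊢
  split_ifs at hcount ⊢ <;> subst_vars <;> simp_all

theorem Nat.add_eq_of_two_mul_dvd_add_mul_succ {m x a b : ℕ} (ha : a ≤ m + x) (hb : b ≤ m - x)
    (hodd : Odd (m - x)) (hpos : 0 < a + b) (hdvd : 2 * m ∣ a + b * (m + 1)) : a + b = m := by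
  obtain ⟨j, hj⟩ := hodd
  obtain ⟨k, rfl | rfl⟩ := Nat.even_or_odd' b
  · have h : 2 * m ∣ a + 2 * k := by
      rwa [show a + 2 * k * (m + 1) = a + 2 * k + 2 * m * k by ring,
        Nat.dvd_add_left (dvd_mul_right _ _)] at hdvd
    have := Nat.eq_of_dvd_of_lt_two_mul hpos.ne' h (by omega)
    omega
  · have h : 2 * m ∣ a + (2 * k + 1) + m := by
      rwa [show a + (2 * k + 1) * (m + 1) = a + (2 * k + 1) + m + 2 * m * k by ring,
        Nat.dvd_add_left (dvd_mul_right _ _)] at hdvd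
    have := Nat.eq_of_dvd_of_lt_two_mul (by omega) h (by omega)
    omega

theorem card_eq_of_sum_eq_zero_of_le_replicate_add_replicate {G : Type*} [AddCancelCommMonoid G]
    {g : G} {m x : ℕ} (hg : addOrderOf g = 2 * m) (hodd : Odd (m - x)) {T : Multiset G}
    (hT : T ≤ Multiset.replicate (m + x) g + Multiset.replicate (m - x) ((m + 1) • g))
    (hT0 : T ≠ 0) (hsum : T.sum = 0) : Multiset.card T = m := by
  classical
  have hm : m ≠ 0 := by obtain ⟨j, hj⟩ := hodd; omega
  have hne : g ≠ (m + 1) • g := by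
    rw [ne_comm, succ_nsmul, Ne, add_eq_right]
    exact nsmul_ne_zero_of_lt_addOrderOf hm (by omega)
  obtain ⟨a, ha, b, hb, rfl⟩ := Multiset.exists_eq_replicate_add_replicate_of_le hne hT
  simp only [Multiset.sum_add, Multiset.sum_replicate, smul_smul, ← add_smul] at hsum
  have hpos := Multiset.card_pos.2 hT0
  simp only [Multiset.card_add, Multiset.card_replicate] at hpos ⊢
  refine Nat.add_eq_of_two_mul_dvd_add_mul_succ ha hb hodd hpos ?_
  exact hg ▸ addOrderOf_dvd_iff_nsmul_eq_zero.2 hsum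

theorem stmt_15_general (n : ℕ) (heven : Even n) (g : ZMod n)
    (hg : addOrderOf g = n) (x : ℕ) (hodd : Odd (n / 2 - x))
    (S : Multiset (ZMod n))
    (hS : S = Multiset.replicate (n / 2 + x) g +
      Multiset.replicate (n / 2 - x) (((n + 2) / 2) • g)) :
    ∀ T : Multiset (ZMod n), T ≤ S → T ≠ 0 → T.sum = 0 →
      Multiset.card T = n / 2 := by
  intro T hT hT0 hsum
  have hn : n = 2 * (n / 2) := (Nat.two_mul_div_two_of_even heven).symm
  rw [show (n + 2) / 2 = n / 2 + 1 by omega] at hS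
  exact card_eq_of_sum_eq_zero_of_le_replicate_add_replicate (hg.trans hn) hodd (hS ▸ hT)
    hT0 hsum

theorem stmt_15 (n : ℕ) (hn : 0 < n) (heven : Even n) (g : ZMod n)
    (hg : addOrderOf g = n) (x : ℕ) (hx : x ≤ n / 2 - 1) (hodd : Odd (n / 2 - x))
    (S : Multiset (ZMod n))
    (hS : S = Multiset.replicate (n / 2 + x) g +
      Multiset.replicate (n / 2 - x) (((n + 2) / 2) • g)) :
    ∀ T : Multiset (ZMod n), T ≤ S → T ≠ 0 → T.sum = 0 →
      Multiset.card T = n / 2 :=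
  stmt_15_general n heven g hg x hodd S hS
end

section
/- Let n ≡ 2 (mod 4), let g be a generator of C_n, let x ∈ [0, n/2 - 1] be even, and let S = (2g)^{n/2 + x}·(((n+4)/2)g)^{n/2 - x}. Then every nonempty zero-sum subsequence of S has length exactly n/2. -/
/-!
A sub-multiset of `S` consists of `i ≤ n/2 + x` copies of `2g` and `j ≤ n/2 - x` copies of
`(n/2 + 2)g`, so with `m = n/2` odd its sum vanishes iff `2m ∣ 2(i + j) + m j`. This forces `j`
to be even and then `m ∣ i + j`. Since `0 < i + j ≤ 2m`, either `i + j = m` or `i + j = 2m`;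
the latter means `j = m - x`, which is odd.
-/

namespace Multiset

variable {α : Type*}

theorem exists_eq_add_of_le_add {u s t : Multiset α} (h : u ≤ s + t) :
    ∃ s' ≤ s, ∃ t' ≤ t, u = s' + t' := by
  classical
  exact ⟨u ∩ s, inter_le_right, u - s, Multiset.sub_le_iff_le_add'.2 h,
    by rw [add_comm, sub_add_inter]⟩

theorem exists_eq_replicate_add_replicate_of_le_s16 {u : Multiset α} {a b : α} {p q : ℕ}
    (h : u ≤ replicate p a + replicate q b) :
    ∃ i ≤ p, ∃ j ≤ q, u = replicate i a + replicate j b := by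
  obtain ⟨s, hs, t, ht, rfl⟩ := exists_eq_add_of_le_add h
  obtain ⟨i, hi, rfl⟩ := le_replicate_iff.1 hs
  obtain ⟨j, hj, rfl⟩ := le_replicate_iff.1 ht
  exact ⟨i, hi, j, hj, rfl⟩

end Multiset

theorem Nat.even_and_dvd_add_of_two_mul_dvd {m i j : ℕ} (hm : Odd m)
    (h : 2 * m ∣ 2 * i + (m + 2) * j) : Even j ∧ m ∣ i + j := by
  rw [show 2 * i + (m + 2) * j = 2 * (i + j) + m * j by ring] at h
  have hj : Even j := by
    have h2 : 2 ∣ m * j :=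
      (Nat.dvd_add_right (dvd_mul_right 2 _)).1 (dvd_trans (dvd_mul_right 2 m) h)
    exact (Nat.even_mul.1 (even_iff_two_dvd.2 h2)).resolve_left (Nat.not_even_iff_odd.2 hm)
  obtain ⟨t, rfl⟩ := hj
  refine ⟨⟨t, rfl⟩, ?_⟩
  rw [show 2 * (i + (t + t)) + m * (t + t) = 2 * (i + (t + t) + m * t) by ring] at h
  exact (Nat.dvd_add_left (dvd_mul_right m t)).1 (Nat.dvd_of_mul_dvd_mul_left two_pos h)

theorem Nat.add_eq_of_two_mul_dvd {m x i j : ℕ} (hm : Odd m) (hx : Even x) (hxm : x < m)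
    (hi : i ≤ m + x) (hj : j ≤ m - x) (hij : i + j ≠ 0)
    (h : 2 * m ∣ 2 * i + (m + 2) * j) : i + j = m := by
  obtain ⟨⟨t, rfl⟩, c, hc⟩ := even_and_dvd_add_of_two_mul_dvd hm h
  have hc2 : c ≤ 2 := Nat.le_of_mul_le_mul_left (by omega : m * c ≤ m * 2) (by omega)
  obtain ⟨k, rfl⟩ := hm
  obtain ⟨y, rfl⟩ := hx
  interval_cases c <;> omega

theorem stmt_16 (n : ℕ) (hn : n % 4 = 2) (g : ZMod n) (hg : addOrderOf g = n)
    (x : ℕ) (hx : x ≤ n / 2 - 1) (hxeven : Even x)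
    (S : Multiset (ZMod n))
    (hS : S = Multiset.replicate (n / 2 + x) (2 • g) +
      Multiset.replicate (n / 2 - x) (((n + 4) / 2) • g)) :
    ∀ T : Multiset (ZMod n), T ≤ S → T ≠ 0 → T.sum = 0 →
      Multiset.card T = n / 2 := by
  intro T hT hT0 hsum
  obtain ⟨m, rfl, hm⟩ : ∃ m, n = 2 * m ∧ Odd m := ⟨n / 2, by omega, by rw [Nat.odd_iff]; omega⟩
  rw [show 2 * m / 2 = m by omega, show (2 * m + 4) / 2 = m + 2 by omega] at *
  subst hS
  obtain ⟨i, hi, j, hj, rfl⟩ := Multiset.exists_eq_replicate_add_replicate_of_le_s16 hT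
  simp only [Multiset.sum_add, Multiset.sum_replicate, smul_smul, ← add_nsmul] at hsum
  rw [← addOrderOf_dvd_iff_nsmul_eq_zero, hg] at hsum
  simp only [Multiset.card_add, Multiset.card_replicate]
  refine Nat.add_eq_of_two_mul_dvd hm hxeven (by omega) hi hj ?_ (by simpa [mul_comm] using hsum)
  simpa [← Multiset.card_eq_zero] using hT0
end
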